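/- Let B(u,v) := (uv)^{1/4}, defined on the domain 𝒟 := {(u,v) ∈ ℝ² : u > 0, v > 0, uv ≥ 1}. Then there is an absolute constant C > 0 such that for all x = (u,v), x₊ = (u₊,v₊), x₋ = (u₋,v₋) in 𝒟 with x = (x₊ + x₋)/2, one has B(x) − (B(x₊) + B(x₋))/2 ≥ C · (v^{1/4}/u^{7/4}) · (u₊ − u₋)². Moreover the Hessian of B satisfies −d²B ≥ (1/8) (v^{1/4}/u^{7/4}) |du|² on 𝒟, i.e. for all (u,v) ∈ 𝒟 and all (du,dv) ∈ ℝ², −(B_{uu} du² + 2 B_{uv} du dv + B_{vv} dv²) ≥ (1/8) v^{1/4} u^{-7/4} du². -/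
import Mathlib


noncomputable section

/-- The Bellman function `B(u,v) = (uv)^{1/4}`. -/
def bellman4 (u v : ℝ) : ℝ := (u * v) ^ ((1 : ℝ)/4)

/-- The domain `𝒟 = {(u,v) : u > 0, v > 0, uv ≥ 1}`. -/
def memD2 (u v : ℝ) : Prop := 0 < u ∧ 0 < v ∧ 1 ≤ u * v

/-- Second partial `B_uu`. -/
def Buu (u v : ℝ) : ℝ := deriv (fun s => deriv (fun t => bellman4 t v) s) u

/-- Mixed second partial `B_uv`. -/
def Buv (u v : ℝ) : ℝ := deriv (fun s => deriv (fun t => bellman4 t s) u) v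

/-- Second partial `B_vv`. -/
def Bvv (u v : ℝ) : ℝ := deriv (fun s => deriv (fun t => bellman4 u t) s) v

/-! ### Auxiliary algebraic lemmas -/

lemma quarter_pow_four {x : ℝ} (hx : 0 < x) : (x ^ ((1:ℝ)/4))^(4:ℕ) = x := by
  rw [← Real.rpow_natCast (x ^ ((1:ℝ)/4)) 4, ← Real.rpow_mul hx.le]; norm_num

lemma quarter_pow_seven {x : ℝ} (hx : 0 < x) : (x ^ ((1:ℝ)/4))^(7:ℕ) = x ^ ((7:ℝ)/4) := by
  rw [← Real.rpow_natCast (x ^ ((1:ℝ)/4)) 7, ← Real.rpow_mul hx.le]; norm_num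

lemma poly_aux (x τ : ℝ) : 2^20 * x^3 * (16*x - τ) ≤ (64*x - τ)^4 := by
  nlinarith [sq_nonneg (τ*(τ - 128*x)), sq_nonneg (τ*x)]

/-- The key algebraic inequality behind midpoint concavity with gain. -/
lemma key_ineq {a b c d U V : ℝ} (ha : 0 < a) (hb : 0 < b) (hc : 0 < c) (hd : 0 < d)
    (hU : 0 < U) (hV : 0 < V) (hU4 : 2*U^4 = a^4 + c^4) (hV4 : 2*V^4 = b^4 + d^4) :
    U*V - (a*b + c*d)/2 ≥ (1/64) * (V / U^7) * (a^4 - c^4)^2 := by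
  have hU8 : 4*U^8 = (a^4+c^4)^2 := by
    linear_combination (2*U^4 + a^4 + c^4) * hU4
  have hU4m : (a^2+c^2)^2*(4*U^4) = 2*(a^4+c^4)*(a^2+c^2)^2 := by
    linear_combination (2*(a^2+c^2)^2) * hU4
  have h1 : (a*b + c*d)^2 ≤ (a^2+c^2)*(b^2+d^2) := by nlinarith [sq_nonneg (a*d - c*b)]
  have h2 : (b^2+d^2)^2 ≤ 4*V^4 := by nlinarith [sq_nonneg (b^2 - d^2)]
  have h3 : (a^2+c^2)^2 * (4*U^4) ≤ 16*U^8 - (a^4 - c^4)^2 := by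
    nlinarith [hU8, hU4m, sq_nonneg ((a^2-c^2)^2)]
  have hs2 : (a^4 - c^4)^2 ≤ 4*U^8 := by nlinarith [hU8, sq_nonneg (a^2*c^2)]
  have hrem : (0:ℝ) ≤ 16*U^8 - (a^4 - c^4)^2 := by nlinarith [pow_pos hU 8]
  have hM4 : (a*b + c*d)^4 * (4*U^4) ≤ 4*V^4 * (16*U^8 - (a^4 - c^4)^2) := by
    have hM2 : ((a*b + c*d)^2)^2 ≤ ((a^2+c^2)*(b^2+d^2))^2 :=
      pow_le_pow_left₀ (sq_nonneg _) h1 2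
    calc (a*b + c*d)^4 * (4*U^4) = ((a*b + c*d)^2)^2 * (4*U^4) := by ring
      _ ≤ ((a^2+c^2)*(b^2+d^2))^2 * (4*U^4) :=
          mul_le_mul_of_nonneg_right hM2 (by positivity)
      _ = ((a^2+c^2)^2*(4*U^4)) * (b^2+d^2)^2 := by ring
      _ ≤ (16*U^8 - (a^4 - c^4)^2) * (b^2+d^2)^2 :=
          mul_le_mul_of_nonneg_right h3 (by positivity)
      _ ≤ (16*U^8 - (a^4 - c^4)^2) * (4*V^4) := mul_le_mul_of_nonneg_left h2 hrem
      _ = 4*V^4*(16*U^8 - (a^4 - c^4)^2) := by ring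
  have hrem' : (0:ℝ) ≤ 64*U^8 - (a^4 - c^4)^2 := by nlinarith [pow_pos hU 8]
  have hstar : 32*U^7*(a*b + c*d) ≤ V*(64*U^8 - (a^4 - c^4)^2) := by
    apply le_of_pow_le_pow_left₀ (n := 4) (by norm_num) (by positivity)
    calc (32*U^7*(a*b + c*d))^4 = 2^18*U^24 * ((a*b + c*d)^4*(4*U^4)) := by ring
      _ ≤ 2^18*U^24 * (4*V^4*(16*U^8 - (a^4 - c^4)^2)) :=
          mul_le_mul_of_nonneg_left hM4 (by positivity)
      _ = V^4 * (2^20 * (U^8)^3 * (16*(U^8) - (a^4 - c^4)^2)) := by ring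
      _ ≤ V^4 * (64*(U^8) - (a^4 - c^4)^2)^4 :=
          mul_le_mul_of_nonneg_left (poly_aux (U^8) ((a^4 - c^4)^2)) (by positivity)
      _ = (V*(64*U^8 - (a^4 - c^4)^2))^4 := by ring
  rw [ge_iff_le,
    show (1:ℝ)/64 * (V/U^7) * (a^4 - c^4)^2 = V*(a^4 - c^4)^2/(64*U^7) by ring,
    div_le_iff₀ (by positivity)]
  nlinarith [hstar]

/-! ### Derivative computations -/

lemma deriv_bellman_fst {v s : ℝ} (hv : 0 < v) (hs : 0 < s) :
    deriv (fun t => bellman4 t v) s = (1:ℝ)/4 * (s*v) ^ ((1:ℝ)/4 - 1) * v := by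
  have h0 : HasDerivAt (fun t : ℝ => t*v) v s := hasDerivAt_mul_const v
  have h := h0.rpow_const (p := (1:ℝ)/4) (Or.inl (ne_of_gt (mul_pos hs hv)))
  have hd : deriv (fun t => bellman4 t v) s
      = v * ((1:ℝ)/4) * (s*v) ^ ((1:ℝ)/4 - 1) := h.deriv
  rw [hd]; ring

lemma deriv_bellman_snd {u s : ℝ} (hu : 0 < u) (hs : 0 < s) :
    deriv (fun t => bellman4 u t) s = (1:ℝ)/4 * (u*s) ^ ((1:ℝ)/4 - 1) * u := by
  have h0 : HasDerivAt (fun t : ℝ => u*t) u s := by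
    simpa using (hasDerivAt_id s).const_mul u
  have h := h0.rpow_const (p := (1:ℝ)/4) (Or.inl (ne_of_gt (mul_pos hu hs)))
  have hd : deriv (fun t => bellman4 u t) s
      = u * ((1:ℝ)/4) * (u*s) ^ ((1:ℝ)/4 - 1) := h.deriv
  rw [hd]; ring

lemma Buu_eq {u v : ℝ} (hu : 0 < u) (hv : 0 < v) :
    Buu u v = -(3/16) * v^2 * (u*v) ^ ((1:ℝ)/4 - 2) := by
  have hev : (fun s => deriv (fun t => bellman4 t v) s)
      =ᶠ[nhds u] (fun s => (1:ℝ)/4 * (s*v) ^ ((1:ℝ)/4 - 1) * v) := by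
    filter_upwards [eventually_gt_nhds hu] with s hs
    exact deriv_bellman_fst hv hs
  rw [Buu, hev.deriv_eq]
  have h0 : HasDerivAt (fun s : ℝ => s*v) v u := hasDerivAt_mul_const v
  have h := h0.rpow_const (p := (1:ℝ)/4 - 1) (Or.inl (ne_of_gt (mul_pos hu hv)))
  have h' := (h.const_mul ((1:ℝ)/4)).mul_const v
  rw [h'.deriv, show (1:ℝ)/4 - 1 - 1 = (1:ℝ)/4 - 2 by norm_num]; ring

lemma Bvv_eq {u v : ℝ} (hu : 0 < u) (hv : 0 < v) :
    Bvv u v = -(3/16) * u^2 * (u*v) ^ ((1:ℝ)/4 - 2) := by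
  have hev : (fun s => deriv (fun t => bellman4 u t) s)
      =ᶠ[nhds v] (fun s => (1:ℝ)/4 * (u*s) ^ ((1:ℝ)/4 - 1) * u) := by
    filter_upwards [eventually_gt_nhds hv] with s hs
    exact deriv_bellman_snd hu hs
  rw [Bvv, hev.deriv_eq]
  have h0 : HasDerivAt (fun s : ℝ => u*s) u v := by
    simpa using (hasDerivAt_id v).const_mul u
  have h := h0.rpow_const (p := (1:ℝ)/4 - 1) (Or.inl (ne_of_gt (mul_pos hu hv)))
  have h' := (h.const_mul ((1:ℝ)/4)).mul_const u
  rw [h'.deriv, show (1:ℝ)/4 - 1 - 1 = (1:ℝ)/4 - 2 by norm_num]; ring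

lemma Buv_eq {u v : ℝ} (hu : 0 < u) (hv : 0 < v) :
    Buv u v = (1:ℝ)/4 * (u*v) ^ ((1:ℝ)/4 - 1)
      + (1:ℝ)/4 * ((1:ℝ)/4 - 1) * (u*v) * (u*v) ^ ((1:ℝ)/4 - 2) := by
  have hev : (fun s => deriv (fun t => bellman4 t s) u)
      =ᶠ[nhds v] (fun s => (1:ℝ)/4 * (u*s) ^ ((1:ℝ)/4 - 1) * s) := by
    filter_upwards [eventually_gt_nhds hv] with s hs
    rw [deriv_bellman_fst hs hu]
  rw [Buv, hev.deriv_eq]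
  have h0 : HasDerivAt (fun s : ℝ => u*s) u v := by
    simpa using (hasDerivAt_id v).const_mul u
  have h := h0.rpow_const (p := (1:ℝ)/4 - 1) (Or.inl (ne_of_gt (mul_pos hu hv)))
  have h1 := h.const_mul ((1:ℝ)/4)
  have h2 := h1.mul (hasDerivAt_id v)
  have hd : deriv (fun s : ℝ => (1:ℝ)/4 * (u*s) ^ ((1:ℝ)/4 - 1) * s) v
      = (1:ℝ)/4 * (u * ((1:ℝ)/4 - 1) * (u * v) ^ ((1:ℝ)/4 - 1 - 1)) * v
        + (1:ℝ)/4 * (u * v) ^ ((1:ℝ)/4 - 1) * 1 := h2.deriv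
  rw [hd, show (1:ℝ)/4 - 1 - 1 = (1:ℝ)/4 - 2 by norm_num]; ring

theorem bellman4_properties :
    (∃ C : ℝ, 0 < C ∧ ∀ u v up vp um vm : ℝ,
      memD2 u v → memD2 up vp → memD2 um vm →
      u = (up + um) / 2 → v = (vp + vm) / 2 →
      bellman4 u v - (bellman4 up vp + bellman4 um vm) / 2
        ≥ C * (v ^ ((1 : ℝ)/4) / u ^ ((7 : ℝ)/4)) * (up - um) ^ 2) ∧
    (∀ u v : ℝ, memD2 u v → ∀ du dv : ℝ,
      -(Buu u v * du ^ 2 + 2 * Buv u v * du * dv + Bvv u v * dv ^ 2)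
        ≥ (1/8) * v ^ ((1 : ℝ)/4) * u ^ (-(7 : ℝ)/4) * du ^ 2) := by
  constructor
  · refine ⟨1/64, by norm_num, fun u v up vp um vm hx hp hm hue hve => ?_⟩
    obtain ⟨hu, hv, -⟩ := hx
    obtain ⟨hup, hvp, -⟩ := hp
    obtain ⟨hum, hvm, -⟩ := hm
    set a := up ^ ((1:ℝ)/4) with hadef
    set b := vp ^ ((1:ℝ)/4) with hbdef
    set c := um ^ ((1:ℝ)/4) with hcdef
    set d := vm ^ ((1:ℝ)/4) with hddef
    set U := u ^ ((1:ℝ)/4) with hUdef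
    set V := v ^ ((1:ℝ)/4) with hVdef
    have ha : 0 < a := Real.rpow_pos_of_pos hup _
    have hb : 0 < b := Real.rpow_pos_of_pos hvp _
    have hc : 0 < c := Real.rpow_pos_of_pos hum _
    have hd : 0 < d := Real.rpow_pos_of_pos hvm _
    have hU : 0 < U := Real.rpow_pos_of_pos hu _
    have hV : 0 < V := Real.rpow_pos_of_pos hv _
    have ha4 : a^4 = up := quarter_pow_four hup
    have hb4 : b^4 = vp := quarter_pow_four hvp
    have hc4 : c^4 = um := quarter_pow_four hum
    have hd4 : d^4 = vm := quarter_pow_four hvm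
    have hU4 : 2*U^4 = a^4 + c^4 := by
      rw [hUdef, quarter_pow_four hu, ha4, hc4]; linarith
    have hV4 : 2*V^4 = b^4 + d^4 := by
      rw [hVdef, quarter_pow_four hv, hb4, hd4]; linarith
    have hbel : bellman4 u v = U * V := Real.mul_rpow hu.le hv.le
    have hbelp : bellman4 up vp = a * b := Real.mul_rpow hup.le hvp.le
    have hbelm : bellman4 um vm = c * d := Real.mul_rpow hum.le hvm.le
    have hu7 : u ^ ((7:ℝ)/4) = U^7 := (quarter_pow_seven hu).symm
    have hupum : (up - um)^2 = (a^4 - c^4)^2 := by rw [ha4, hc4]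
    rw [hbel, hbelp, hbelm, hu7, hupum]
    exact key_ineq ha hb hc hd hU hV hU4 hV4
  · rintro u v ⟨hu, hv, -⟩ du dv
    have hw : 0 < u * v := mul_pos hu hv
    have hP : 0 < (u*v) ^ ((1:ℝ)/4 - 2) := Real.rpow_pos_of_pos hw _
    have hBuu := Buu_eq hu hv
    have hBvv := Bvv_eq hu hv
    have hBuv : Buv u v = (1:ℝ)/16 * ((u*v) * (u*v) ^ ((1:ℝ)/4 - 2)) := by
      rw [Buv_eq hu hv,
        show (1:ℝ)/4 - 1 = 1 + ((1:ℝ)/4 - 2) by norm_num,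
        Real.rpow_add hw, Real.rpow_one]
      ring
    have hvu : v ^ ((1:ℝ)/4) * u ^ (-(7:ℝ)/4) = v^2 * (u*v) ^ ((1:ℝ)/4 - 2) := by
      rw [show (u*v) ^ ((1:ℝ)/4 - 2) = u ^ ((1:ℝ)/4 - 2) * v ^ ((1:ℝ)/4 - 2) from
        Real.mul_rpow hu.le hv.le,
        show (v:ℝ)^2 = v ^ (2:ℝ) from by rw [← Real.rpow_natCast v 2]; norm_num,
        show u ^ ((1:ℝ)/4 - 2) = u ^ (-(7:ℝ)/4) from by norm_num]
      rw [mul_comm (u ^ (-(7:ℝ)/4)) (v ^ ((1:ℝ)/4 - 2)), ← mul_assoc,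
        ← Real.rpow_add hv]
      norm_num
    have hgoal : (1:ℝ)/8 * v ^ ((1:ℝ)/4) * u ^ (-(7:ℝ)/4) * du^2
        = 1/8 * (v^2 * (u*v) ^ ((1:ℝ)/4 - 2)) * du^2 := by
      rw [mul_assoc ((1:ℝ)/8), hvu]
    rw [ge_iff_le, hgoal, hBuu, hBvv, hBuv]
    nlinarith [mul_nonneg hP.le (sq_nonneg (v*du - u*dv)),
      mul_nonneg hP.le (sq_nonneg (u*dv))]

end
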